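/- Let F and G be cdf's of lattice distributions with spacings c_F > 0 and c_G > 0 between neighbouring support points. Then F ≼_∧ G, F ≼_∨ G, and the condition [q_b ≤ p_a for all dispersion-relevant pairs (a,b) and c_F ≤ c_G] are all equivalent. -/

import Mathlib

/-!
For lattice distributions the spacing condition of either order reads `cF ≤ cG` on every pair it
constrains, and `≼_∨` constrains more pairs than `≼_∧`. So everything hinges on the existence of
one pair with `a ▷◁ b` and `a - 1 ▷◁ b - 1`. Such a corner of the staircase `{(a, b) | a ▷◁ b}`
appears wherever a jump boundary `F.L a` of `F` is followed by a boundary `G.L b` of `G` with no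
boundary in between: start from an interior boundary `u` of `F`, let `G.L b` be the first boundary
of `G` that is `≥ u`, and let `F.L a` be the last boundary of `F` that is `≤ G.L b`.
-/

/-- A purposive discrete distribution: support indexed by an interval of `ℤ`
with at least two elements, strictly increasing support points `x` and
positive probabilities `p` summing to one. -/
structure DiscDist where
  A : Set ℤ
  x : ℤ → ℝ
  p : ℤ → ℝ
  hA2 : ∃ a b, a ∈ A ∧ b ∈ A ∧ a ≠ b
  hAconn : ∀ a b c : ℤ, a ∈ A → c ∈ A → a ≤ b → b ≤ c → b ∈ A
  hmono : ∀ a b : ℤ, a ∈ A → b ∈ A → a < b → x a < x b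
  hpos : ∀ a ∈ A, 0 < p a
  hzero : ∀ a ∉ A, p a = 0
  hsummable : Summable p
  hsum : ∑' a, p a = 1

/-- Cumulative probability strictly below index `a`, i.e. `F(x_{a-1})`. -/
noncomputable def DiscDist.L (D : DiscDist) (a : ℤ) : ℝ :=
  ∑' i : ℤ, if i < a then D.p i else 0

/-- The relation `a ▷◁ b`: the jump intervals `(F(x_{a-1}), F(x_a))` and
`(G(y_{b-1}), G(y_b))` intersect. -/
def DRel (F G : DiscDist) (a b : ℤ) : Prop :=
  a ∈ F.A ∧ b ∈ G.A ∧
    max (F.L a) (G.L b) < min (F.L (a + 1)) (G.L (b + 1))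

/-- The ∧-discrete dispersive order `F ≼_∧ G`. -/
def discoA (F G : DiscDist) : Prop :=
  (∀ a b, DRel F G a b → G.p b ≤ F.p a) ∧
  (∀ a b, DRel F G a b → DRel F G (a - 1) (b - 1) →
    F.x a - F.x (a - 1) ≤ G.x b - G.x (b - 1))

/-- The ∨-discrete dispersive order `F ≼_∨ G`. -/
def discoO (F G : DiscDist) : Prop :=
  (∀ a b, DRel F G a b → G.p b ≤ F.p a) ∧
  (∀ a b, a ∈ F.A → a - 1 ∈ F.A → b ∈ G.A → b - 1 ∈ G.A →
    (DRel F G a b ∨ DRel F G (a - 1) (b - 1)) →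
    F.x a - F.x (a - 1) ≤ G.x b - G.x (b - 1))

/-- Cumulative distribution function of a discrete distribution. -/
noncomputable def DiscDist.cdf (D : DiscDist) (t : ℝ) : ℝ :=
  ∑' a : ℤ, if D.x a ≤ t then D.p a else 0

open Set

namespace DiscDist

variable (D : DiscDist)

lemma p_nonneg (i : ℤ) : 0 ≤ D.p i := by
  by_cases h : i ∈ D.A
  · exact (D.hpos i h).le
  · exact (D.hzero i h).ge

lemma L_eq_tsum_indicator (a : ℤ) : D.L a = ∑' i, (Iio a).indicator D.p i := by
  simp only [L, indicator_apply, mem_Iio]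

lemma tsum_indicator_mono {S T : Set ℤ} (h : S ⊆ T) :
    ∑' i, S.indicator D.p i ≤ ∑' i, T.indicator D.p i :=
  (D.hsummable.indicator S).tsum_le_tsum (indicator_le_indicator_of_subset h D.p_nonneg)
    (D.hsummable.indicator T)

lemma tsum_indicator_le_one (S : Set ℤ) : ∑' i, S.indicator D.p i ≤ 1 :=
  D.hsum ▸ (D.hsummable.indicator S).tsum_le_tsum
    (indicator_le_self' fun i _ => D.p_nonneg i) D.hsummable

lemma tsum_indicator_union {S T : Set ℤ} (h : Disjoint S T) :
    ∑' i, (S ∪ T).indicator D.p i = ∑' i, S.indicator D.p i + ∑' i, T.indicator D.p i := by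
  rw [indicator_union_of_disjoint h]
  exact (D.hsummable.indicator S).tsum_add (D.hsummable.indicator T)

lemma L_mono : Monotone D.L := fun a b hab => by
  simpa only [L_eq_tsum_indicator] using D.tsum_indicator_mono (Iio_subset_Iio hab)

lemma L_nonneg (a : ℤ) : 0 ≤ D.L a :=
  tsum_nonneg fun i => by by_cases h : i < a <;> simp [h, D.p_nonneg i]

lemma L_succ (a : ℤ) : D.L (a + 1) = D.L a + D.p a := by
  have hIio : Iio (a + 1) = Iio a ∪ {a} := by
    ext i
    simp only [mem_Iio, mem_union, mem_singleton_iff]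
    omega
  rw [L_eq_tsum_indicator, L_eq_tsum_indicator, hIio,
    D.tsum_indicator_union (S := Iio a) (by simp),
    indicator_singleton, tsum_pi_single]

lemma L_lt_L_succ {a : ℤ} (ha : a ∈ D.A) : D.L a < D.L (a + 1) := by
  linarith [D.L_succ a, D.hpos a ha]

lemma mem_of_L_lt_L_succ {a : ℤ} (h : D.L a < D.L (a + 1)) : a ∈ D.A := by
  by_contra ha
  linarith [D.L_succ a, D.hzero a ha]

lemma L_lt_one {a : ℤ} (ha : a ∈ D.A) : D.L a < 1 :=
  (D.L_lt_L_succ ha).trans_le <| (D.L_eq_tsum_indicator _).trans_le (D.tsum_indicator_le_one _)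

lemma exists_L_lt {ε : ℝ} (hε : 0 < ε) : ∃ m, D.L m < ε := by
  obtain ⟨s, hs⟩ := ((D.hsum ▸ D.hsummable.hasSum).eventually
    (eventually_gt_nhds (sub_lt_self 1 hε))).exists
  obtain ⟨m, hm⟩ := s.bddBelow
  have hdisj : Disjoint (Iio m) (s : Set ℤ) :=
    disjoint_left.2 fun i hi his => not_le.2 hi (hm his)
  have := D.tsum_indicator_le_one (Iio m ∪ s)
  rw [D.tsum_indicator_union hdisj, ← sum_eq_tsum_indicator, ← L_eq_tsum_indicator] at this
  exact ⟨m, by linarith⟩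

lemma exists_lt_L {v : ℝ} (hv : v < 1) : ∃ M, v < D.L M := by
  obtain ⟨s, hs⟩ := ((D.hsum ▸ D.hsummable.hasSum).eventually (eventually_gt_nhds hv)).exists
  obtain ⟨M, hM⟩ := s.bddAbove
  refine ⟨M + 1, hs.trans_le ?_⟩
  rw [sum_eq_tsum_indicator, L_eq_tsum_indicator]
  exact D.tsum_indicator_mono fun i hi => Int.lt_add_one_iff.2 (hM hi)

lemma exists_sub_one_mem : ∃ a, a - 1 ∈ D.A ∧ a ∈ D.A := by
  obtain ⟨a, b, ha, hb, hab⟩ := D.hA2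
  rcases hab.lt_or_gt with h | h
  · exact ⟨b, D.hAconn a (b - 1) b ha hb (by omega) (by omega), hb⟩
  · exact ⟨a, D.hAconn b (a - 1) a hb ha (by omega) (by omega), ha⟩

end DiscDist

lemma DRel.symm {F G : DiscDist} {a b : ℤ} (h : DRel F G a b) : DRel G F b a :=
  ⟨h.2.1, h.1, by rw [max_comm, min_comm]; exact h.2.2⟩

lemma DRel_and_DRel_sub_one_of_interleave {F G : DiscDist} {a b : ℤ}
    (ha : a ∈ F.A) (ha' : a - 1 ∈ F.A) (hb : b ∈ G.A) (hb' : b - 1 ∈ G.A)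
    (hGF : G.L (b - 1) < F.L a) (hFG : F.L a ≤ G.L b) (hGF' : G.L b < F.L (a + 1)) :
    DRel F G a b ∧ DRel F G (a - 1) (b - 1) := by
  have hF := F.L_lt_L_succ ha'
  have hG := G.L_lt_L_succ hb
  rw [sub_add_cancel] at hF
  refine ⟨⟨ha, hb, ?_⟩, ⟨ha', hb', ?_⟩⟩
  · rw [max_eq_right hFG]
    exact lt_min hGF' hG
  · rw [sub_add_cancel, sub_add_cancel, min_eq_left hFG]
    exact max_lt hF hGF

lemma exists_DRel_and_DRel_sub_one_of_L_le {F G : DiscDist} {a₀ b₀ : ℤ}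
    (ha₀ : a₀ - 1 ∈ F.A) (hb₀ : b₀ ∈ G.A) (h : F.L a₀ ≤ G.L b₀) :
    ∃ a b, DRel F G a b ∧ DRel F G (a - 1) (b - 1) := by
  set u := F.L a₀
  have hu : 0 < u := by
    have := F.L_lt_L_succ ha₀
    rw [sub_add_cancel] at this
    exact (F.L_nonneg _).trans_lt this
  obtain ⟨m, hm⟩ := G.exists_L_lt hu
  obtain ⟨b, hub, hb_min⟩ := Int.exists_least_of_bdd (P := fun z => u ≤ G.L z)
    ⟨m, fun z hz => le_of_not_gt fun hzm => (hm.trans_le' (G.L_mono hzm.le)).not_ge hz⟩ ⟨b₀, h⟩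
  have hGb : G.L (b - 1) < u := lt_of_not_ge fun hle => by linarith [hb_min _ hle]
  have hb' : b - 1 ∈ G.A := G.mem_of_L_lt_L_succ (by rw [sub_add_cancel]; linarith)
  have hb : b ∈ G.A := G.hAconn _ b b₀ hb' hb₀ (by omega) (hb_min b₀ h)
  set v := G.L b
  obtain ⟨M, hM⟩ := F.exists_lt_L (G.L_lt_one hb)
  obtain ⟨a, hav, ha_max⟩ := Int.exists_greatest_of_bdd (P := fun z => F.L z ≤ v)
    ⟨M, fun z hz => le_of_not_gt fun hMz => (hM.trans_le (F.L_mono hMz.le)).not_ge hz⟩ ⟨a₀, hub⟩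
  have hva : v < F.L (a + 1) := lt_of_not_ge fun hle => by linarith [ha_max _ hle]
  have ha : a ∈ F.A := F.mem_of_L_lt_L_succ (hav.trans_lt hva)
  have ha₀a : a₀ ≤ a := ha_max a₀ hub
  have ha' : a - 1 ∈ F.A := F.hAconn (a₀ - 1) _ a ha₀ ha (by omega) (by omega)
  exact ⟨a, b, DRel_and_DRel_sub_one_of_interleave ha ha' hb hb'
    (hGb.trans_le (F.L_mono ha₀a)) hav hva⟩

lemma exists_DRel_and_DRel_sub_one (F G : DiscDist) :
    ∃ a b, DRel F G a b ∧ DRel F G (a - 1) (b - 1) := by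
  obtain ⟨a₀, ha₀, ha₀'⟩ := F.exists_sub_one_mem
  obtain ⟨b₀, hb₀, hb₀'⟩ := G.exists_sub_one_mem
  rcases le_total (F.L a₀) (G.L b₀) with h | h
  · exact exists_DRel_and_DRel_sub_one_of_L_le ha₀ hb₀' h
  · obtain ⟨b, a, h₁, h₂⟩ := exists_DRel_and_DRel_sub_one_of_L_le hb₀ ha₀' h
    exact ⟨a, b, h₁.symm, h₂.symm⟩

section Lattice

variable {F G : DiscDist} {cF cG : ℝ}

lemma DiscDist.x_sub_x_sub_one_of_lattice {D : DiscDist} {c : ℝ}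
    (hlat : ∀ a : ℤ, a ∈ D.A → a + 1 ∈ D.A → D.x (a + 1) - D.x a = c) {a : ℤ}
    (ha : a ∈ D.A) (ha' : a - 1 ∈ D.A) : D.x a - D.x (a - 1) = c := by
  simpa using hlat (a - 1) ha' (by simpa using ha)

lemma discoA_of_discoO (h : discoO F G) : discoA F G :=
  ⟨h.1, fun a b hab hab' => h.2 a b hab.1 hab'.1 hab.2.1 hab'.2.1 (Or.inl hab)⟩

lemma le_of_discoA_of_lattice
    (hlatF : ∀ a : ℤ, a ∈ F.A → a + 1 ∈ F.A → F.x (a + 1) - F.x a = cF)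
    (hlatG : ∀ b : ℤ, b ∈ G.A → b + 1 ∈ G.A → G.x (b + 1) - G.x b = cG)
    (h : discoA F G) : cF ≤ cG := by
  obtain ⟨a, b, hab, hab'⟩ := exists_DRel_and_DRel_sub_one F G
  rw [← F.x_sub_x_sub_one_of_lattice hlatF hab.1 hab'.1,
    ← G.x_sub_x_sub_one_of_lattice hlatG hab.2.1 hab'.2.1]
  exact h.2 a b hab hab'

lemma discoO_of_lattice_of_le
    (hlatF : ∀ a : ℤ, a ∈ F.A → a + 1 ∈ F.A → F.x (a + 1) - F.x a = cF)
    (hlatG : ∀ b : ℤ, b ∈ G.A → b + 1 ∈ G.A → G.x (b + 1) - G.x b = cG)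
    (hp : ∀ a b, DRel F G a b → G.p b ≤ F.p a) (hc : cF ≤ cG) : discoO F G := by
  refine ⟨hp, fun a b ha ha' hb hb' _ => ?_⟩
  rwa [F.x_sub_x_sub_one_of_lattice hlatF ha ha', G.x_sub_x_sub_one_of_lattice hlatG hb hb']

end Lattice

theorem stmt_10_general (F G : DiscDist) (cF cG : ℝ)
    (hlatF : ∀ a : ℤ, a ∈ F.A → a + 1 ∈ F.A → F.x (a + 1) - F.x a = cF)
    (hlatG : ∀ b : ℤ, b ∈ G.A → b + 1 ∈ G.A → G.x (b + 1) - G.x b = cG) :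
    (discoA F G ↔ discoO F G) ∧
    (discoA F G ↔ ((∀ a b, DRel F G a b → G.p b ≤ F.p a) ∧ cF ≤ cG)) := by
  have hle : discoA F G → cF ≤ cG := le_of_discoA_of_lattice hlatF hlatG
  have hO : (∀ a b, DRel F G a b → G.p b ≤ F.p a) → cF ≤ cG → discoO F G :=
    discoO_of_lattice_of_le hlatF hlatG
  exact ⟨⟨fun h => hO h.1 (hle h), discoA_of_discoO⟩,
    ⟨fun h => ⟨h.1, hle h⟩, fun h => discoA_of_discoO (hO h.1 h.2)⟩⟩

/-- For lattice distributions with spacings `cF` and `cG`, the orders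
`≼_∧`, `≼_∨` and the condition `[jump heights ordered on dispersion-relevant
pairs and cF ≤ cG]` are all equivalent. -/
theorem stmt_10 (F G : DiscDist) (cF cG : ℝ) (hcF : 0 < cF) (hcG : 0 < cG)
    (hlatF : ∀ a : ℤ, a ∈ F.A → a + 1 ∈ F.A → F.x (a + 1) - F.x a = cF)
    (hlatG : ∀ b : ℤ, b ∈ G.A → b + 1 ∈ G.A → G.x (b + 1) - G.x b = cG) :
    (discoA F G ↔ discoO F G) ∧
    (discoA F G ↔ ((∀ a b, DRel F G a b → G.p b ≤ F.p a) ∧ cF ≤ cG)) :=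
  stmt_10_general F G cF cG hlatF hlatG
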